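/- The Fermat polynomials {x_i^q x_j - x_i x_j^q : 0 ≤ i < j ≤ m} form a Gröbner basis of the ideal they generate in k[x_0,...,x_m], with respect to any monomial order in which x_0 > x_1 > ... > x_m; in fact they form a reduced Gröbner basis. -/

import Mathlib

open MvPolynomial Finset

/-- Reduce an exponent modulo `q-1`: unchanged if `≤ q-1`, otherwise the
representative in `{1,...,q-1}` congruent to it modulo `q-1`. -/
def redExp (q a : ℕ) : ℕ := if a ≤ q - 1 then a else (a - 1) % (q - 1) + 1

/-- Projective reduction of a monomial (given by its exponent vector): all exponents
below the top variable of the support are reduced modulo `q-1`, and the difference is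
transferred to the exponent of the top variable. -/
noncomputable def projRed (q : ℕ) {m : ℕ} (μ : Fin (m + 1) →₀ ℕ) : Fin (m + 1) →₀ ℕ :=
  if h : μ.support.Nonempty then
    letI ℓ := μ.support.max' h
    Finsupp.equivFunOnFinite.symm fun i =>
      if i < ℓ then redExp q (μ i)
      else if i = ℓ then μ ℓ + ∑ j ∈ Finset.univ.filter (· < ℓ), (μ j - redExp q (μ j))
      else 0
  else 0

/-- Projective reduction of a polynomial: the linear extension of projective
reduction of monomials. -/
noncomputable def polyRed (q : ℕ) {m : ℕ} {k : Type} [CommRing k]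
    (f : MvPolynomial (Fin (m + 1)) k) : MvPolynomial (Fin (m + 1)) k :=
  f.support.sum fun μ => monomial (projRed q μ) (coeff μ f)

/-- The ideal generated by the Fermat polynomials `X i ^ q * X j - X i * X j ^ q`. -/
noncomputable def fermatIdeal (q m : ℕ) (k : Type) [CommRing k] : Ideal (MvPolynomial (Fin (m + 1)) k) :=
  Ideal.span {f | ∃ i j : Fin (m + 1), i < j ∧ f = X i ^ q * X j - X i * X j ^ q}

/-- The leading exponent (exponent vector of the leading monomial) of a multivariate
polynomial with respect to a monomial order. -/
noncomputable def lmExp {σ : Type} (mo : MonomialOrder σ) {R : Type} [CommSemiring R]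
    (f : MvPolynomial σ R) : σ →₀ ℕ :=
  mo.toSyn.symm (f.support.sup fun μ => mo.toSyn μ)

/-!
Projective reduction `projRed q` rewrites a monomial with last variable `x_ℓ` by bringing the
exponent of every earlier variable into `{0, …, q - 1}` modulo `q - 1` (positive exponents stay
positive) and moving the excess onto `x_ℓ`. Multiplying a monomial containing `x_i` and `x_j` by
`x_i ^ (q - 1)` or by `x_j ^ (q - 1)` changes its reduction in the same way, so the linear
extension `polyRed q` kills the Fermat ideal. Since the reduction only shifts degree to later
variables, it never increases a monomial. Hence, if the leading monomial of `f` in the ideal were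
divisible by no `x_i ^ q * x_j`, it would be fixed by the reduction while no other monomial of `f`
could reach it, and its coefficient would survive in `polyRed q f = 0`.
-/

open Finsupp (single)

lemma lmExp_eq_degree {σ R : Type} [CommSemiring R] (mo : MonomialOrder σ) (f : MvPolynomial σ R) :
    lmExp mo f = mo.degree f := rfl

lemma redExp_le (q a : ℕ) : redExp q a ≤ a := by
  unfold redExp
  split_ifs
  · exact le_rfl
  · have := Nat.mod_le (a - 1) (q - 1)
    omega

lemma redExp_of_le {q a : ℕ} (h : a ≤ q - 1) : redExp q a = a := if_pos h

lemma redExp_add_sub_one {q a : ℕ} (ha : 1 ≤ a) : redExp q (a + (q - 1)) = redExp q a := by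
  unfold redExp
  rcases Nat.eq_zero_or_pos (q - 1) with h0 | hpos
  · simp [h0]
  rw [if_neg (by omega), show a + (q - 1) - 1 = a - 1 + (q - 1) by omega, Nat.add_mod_right]
  split_ifs with h
  · rw [Nat.mod_eq_of_lt (by omega)]
    omega
  · rfl

lemma eq_of_degree_eq_of_forall_ne {σ R : Type*} [AddCancelCommMonoid R] {f g : σ →₀ R}
    (a : σ) (hfg : ∀ t, t ≠ a → f t = g t) (hdeg : f.degree = g.degree) : f = g := by
  have herase : f.erase a = g.erase a := by
    ext t
    by_cases ht : t = a
    · simp [ht]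
    · simp [Finsupp.erase_ne ht, hfg t ht]
  have hfa : f a = g a := by
    rw [← Finsupp.single_add_erase a f, ← Finsupp.single_add_erase a g, map_add, map_add,
      Finsupp.degree_single, Finsupp.degree_single, herase] at hdeg
    exact add_right_cancel hdeg
  rw [← Finsupp.single_add_erase a f, ← Finsupp.single_add_erase a g, hfa, herase]

section MonomialOrder

variable {σ : Type*} {mo : MonomialOrder σ}

lemma degree_monomial_one {R : Type*} [CommSemiring R] [Nontrivial R] (d : σ →₀ ℕ) :
    mo.degree (monomial d (1 : R)) = d := by
  classical
  rw [MonomialOrder.degree_monomial, if_neg one_ne_zero]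

variable [Preorder σ]

lemma toSyn_single_le_of_antitone (hmo : Antitone fun i => mo.toSyn (single i 1)) {i j : σ}
    (hij : i ≤ j) (n : ℕ) : mo.toSyn (single j n) ≤ mo.toSyn (single i n) := by
  rw [← Finsupp.smul_single_one, ← Finsupp.smul_single_one i, map_nsmul, map_nsmul]
  exact nsmul_le_nsmul_right (hmo hij) n

lemma toSyn_single_lt_of_strictAnti (hmo : StrictAnti fun i => mo.toSyn (single i 1))
    {i j : σ} (hij : i < j) {n : ℕ} (hn : n ≠ 0) :
    mo.toSyn (single j n) < mo.toSyn (single i n) := by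
  rw [← Finsupp.smul_single_one, ← Finsupp.smul_single_one i, map_nsmul, map_nsmul]
  exact nsmul_lt_nsmul_right hn (hmo hij)

end MonomialOrder

section projRed

variable {q m : ℕ} {μ : Fin (m + 1) →₀ ℕ} {ℓ : Fin (m + 1)}

lemma projRed_zero : projRed q (0 : Fin (m + 1) →₀ ℕ) = 0 := by
  simp [projRed]

lemma projRed_apply (hℓ : IsGreatest (μ.support : Set (Fin (m + 1))) ℓ) (t : Fin (m + 1)) :
    projRed q μ t =
      if t < ℓ then redExp q (μ t)
      else if t = ℓ then μ ℓ + ∑ r ∈ univ.filter (· < ℓ), (μ r - redExp q (μ r))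
      else 0 := by
  have hne : μ.support.Nonempty := ⟨ℓ, hℓ.1⟩
  have htop : μ.support.max' hne = ℓ := (max'_eq_iff _ _ _).2 hℓ
  simp [projRed, hne, htop]

lemma apply_eq_zero_of_isGreatest_lt (hℓ : IsGreatest (μ.support : Set (Fin (m + 1))) ℓ)
    {t : Fin (m + 1)} (ht : ℓ < t) : μ t = 0 :=
  Finsupp.notMem_support_iff.1 fun h => (hℓ.2 h).not_gt ht

lemma projRed_add_sum_single (hℓ : IsGreatest (μ.support : Set (Fin (m + 1))) ℓ) :
    projRed q μ + ∑ r ∈ univ.filter (· < ℓ), single r (μ r - redExp q (μ r)) =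
      μ + single ℓ (∑ r ∈ univ.filter (· < ℓ), (μ r - redExp q (μ r))) := by
  ext t
  simp only [Finsupp.add_apply, Finsupp.finsetSum_apply, Finsupp.single_apply,
    projRed_apply hℓ, sum_ite_eq', mem_filter, mem_univ, true_and]
  rcases lt_trichotomy t ℓ with h | rfl | h
  · have := redExp_le q (μ t)
    simp only [h, h.ne', if_true, if_false]
    omega
  · simp
  · simp [h.ne, h.ne', not_lt.2 h.le, apply_eq_zero_of_isGreatest_lt hℓ h]

lemma degree_projRed (μ : Fin (m + 1) →₀ ℕ) : (projRed q μ).degree = μ.degree := by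
  by_cases hne : μ.support.Nonempty
  · have h := congrArg Finsupp.degree
      (projRed_add_sum_single (q := q) (μ.support.isGreatest_max' hne))
    simp only [map_add, map_sum, Finsupp.degree_single] at h
    omega
  · obtain rfl : μ = 0 := by simpa using hne
    rw [projRed_zero]

lemma projRed_add_single_sub_one (hℓ : IsGreatest (μ.support : Set (Fin (m + 1))) ℓ)
    {t : Fin (m + 1)} (ht : t ∈ μ.support) :
    projRed q (μ + single t (q - 1)) = projRed q μ + single ℓ (q - 1) := by
  have hℓ' : IsGreatest ((μ + single t (q - 1)).support : Set (Fin (m + 1))) ℓ := by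
    refine ⟨?_, fun s hs => ?_⟩
    · have := Finsupp.mem_support_iff.1 hℓ.1
      rw [mem_coe, Finsupp.mem_support_iff, Finsupp.add_apply]
      omega
    · rcases mem_union.1 (Finsupp.support_add hs) with hs | hs
      · exact hℓ.2 hs
      · rw [mem_singleton.1 (Finsupp.support_single_subset hs)]
        exact hℓ.2 ht
  refine eq_of_degree_eq_of_forall_ne ℓ (fun s hs => ?_) ?_
  · rw [Finsupp.add_apply, projRed_apply hℓ', projRed_apply hℓ]
    rcases lt_or_gt_of_ne hs with h | h
    · simp only [h, if_true, Finsupp.add_apply, Finsupp.single_apply, hs.symm, if_false,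
        add_zero]
      split_ifs with hts
      · subst hts
        exact redExp_add_sub_one (Nat.one_le_iff_ne_zero.2 (Finsupp.mem_support_iff.1 ht))
      · rw [add_zero]
    · simp [not_lt.2 h.le, h.ne']
  · simp only [degree_projRed, map_add, Finsupp.degree_single]

lemma projRed_eq_self (hμ : ∀ i j : Fin (m + 1), i < j → ¬ single i q + single j 1 ≤ μ) :
    projRed q μ = μ := by
  by_cases hne : μ.support.Nonempty
  · have hℓ := μ.support.isGreatest_max' hne
    refine eq_of_degree_eq_of_forall_ne (μ.support.max' hne) (fun t ht => ?_) (degree_projRed μ)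
    rw [projRed_apply hℓ]
    rcases lt_or_gt_of_ne ht with h | h
    · rw [if_pos h, redExp_of_le]
      by_contra hbig
      have htop := Finsupp.mem_support_iff.1 hℓ.1
      refine hμ _ _ h (Finsupp.le_def.2 fun s => ?_)
      simp only [Finsupp.add_apply, Finsupp.single_apply]
      split_ifs <;> subst_vars <;> omega
    · rw [if_neg (not_lt.2 h.le), if_neg h.ne', apply_eq_zero_of_isGreatest_lt hℓ h]
  · obtain rfl : μ = 0 := by simpa using hne
    exact projRed_zero

lemma toSyn_projRed_le {mo : MonomialOrder (Fin (m + 1))}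
    (hmo : Antitone fun i => mo.toSyn (single i 1)) (μ : Fin (m + 1) →₀ ℕ) :
    mo.toSyn (projRed q μ) ≤ mo.toSyn μ := by
  by_cases hne : μ.support.Nonempty
  · have key := congrArg mo.toSyn
      (projRed_add_sum_single (q := q) (μ.support.isGreatest_max' hne))
    rw [map_add, map_add] at key
    set ℓ := μ.support.max' hne
    -- the excess moved onto the last variable `x_ℓ` weighs less than where it came from
    have hmove : mo.toSyn (single ℓ (∑ r ∈ univ.filter (· < ℓ), (μ r - redExp q (μ r)))) ≤
        mo.toSyn (∑ r ∈ univ.filter (· < ℓ), single r (μ r - redExp q (μ r))) := by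
      rw [Finsupp.single_finsetSum, map_sum, map_sum]
      exact sum_le_sum fun r hr => toSyn_single_le_of_antitone hmo (mem_filter.1 hr).2.le _
    exact le_of_add_le_add_right (key.le.trans (add_le_add_right hmove _))
  · obtain rfl : μ = 0 := by simpa using hne
    rw [projRed_zero]

end projRed

section Fermat

variable {σ R : Type*} [CommRing R] {q : ℕ}

lemma fermat_eq_monomial_sub (i j : σ) :
    (X i ^ q * X j - X i * X j ^ q : MvPolynomial σ R) =
      monomial (single i q + single j 1) 1 - monomial (single i 1 + single j q) 1 := by
  simp only [X, monomial_pow, monomial_mul, one_pow, mul_one, Finsupp.smul_single_one]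

lemma not_single_add_single_le_of_mem_support_fermat [LinearOrder σ] (hq : 1 ≤ q)
    {i j r s : σ} (hij : i < j) (hrs : r < s) (hne : (r, s) ≠ (i, j)) {μ : σ →₀ ℕ}
    (hμ : μ ∈ (X i ^ q * X j - X i * X j ^ q : MvPolynomial σ R).support) :
    ¬ single r q + single s 1 ≤ μ := by
  classical
  intro hle
  have hvanish : ∀ t, t ≠ i → t ≠ j → μ t = 0 := by
    rw [fermat_eq_monomial_sub] at hμ
    have hμ' := support_sub σ _ _ hμ
    simp only [mem_union] at hμ'
    rcases hμ' with h | h <;> rw [mem_singleton.1 (support_monomial_subset h)] <;>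
      intro t hti htj <;> simp [hti.symm, htj.symm]
  have hmem : ∀ t, μ t ≠ 0 → t = i ∨ t = j := fun t ht => by
    by_contra! h
    exact ht (hvanish t h.1 h.2)
  have hr := Finsupp.le_def.1 hle r
  have hs := Finsupp.le_def.1 hle s
  simp only [Finsupp.add_apply, Finsupp.single_eq_same, Finsupp.single_eq_of_ne hrs.ne,
    Finsupp.single_eq_of_ne hrs.ne'] at hr hs
  rcases hmem r (by omega) with rfl | rfl <;> rcases hmem s (by omega) with rfl | rfl
  · exact lt_irrefl _ hrs
  · exact hne rfl
  · exact lt_asymm hij hrs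
  · exact lt_irrefl _ hrs

variable [Preorder σ] {mo : MonomialOrder σ}

lemma toSyn_fermat_lt (hq : 2 ≤ q) (hmo : StrictAnti fun i => mo.toSyn (single i 1))
    {i j : σ} (hij : i < j) :
    mo.toSyn (single i 1 + single j q) < mo.toSyn (single i q + single j 1) := by
  have hswap : single i 1 + single j q + single i (q - 1) =
      single i q + single j 1 + single j (q - 1) := by
    classical
    ext t
    simp only [Finsupp.add_apply, Finsupp.single_apply]
    split_ifs <;> subst_vars <;> omega
  refine lt_of_add_lt_add_right (a := mo.toSyn (single i (q - 1))) ?_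
  calc mo.toSyn (single i 1 + single j q) + mo.toSyn (single i (q - 1))
      = mo.toSyn (single i q + single j 1) + mo.toSyn (single j (q - 1)) := by
        rw [← map_add, hswap, map_add]
    _ < mo.toSyn (single i q + single j 1) + mo.toSyn (single i (q - 1)) :=
        add_lt_add_of_le_of_lt le_rfl (toSyn_single_lt_of_strictAnti hmo hij (by omega))

variable [Nontrivial R]

lemma degree_fermat (hq : 2 ≤ q) (hmo : StrictAnti fun i => mo.toSyn (single i 1))
    {i j : σ} (hij : i < j) :
    mo.degree (X i ^ q * X j - X i * X j ^ q : MvPolynomial σ R) = single i q + single j 1 := by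
  rw [fermat_eq_monomial_sub, mo.degree_sub_of_lt, degree_monomial_one]
  simpa only [degree_monomial_one] using toSyn_fermat_lt hq hmo hij

lemma monic_fermat (hq : 2 ≤ q) (hmo : StrictAnti fun i => mo.toSyn (single i 1))
    {i j : σ} (hij : i < j) : mo.Monic (X i ^ q * X j - X i * X j ^ q : MvPolynomial σ R) := by
  rw [MonomialOrder.Monic, fermat_eq_monomial_sub, mo.leadingCoeff_sub_of_lt,
    mo.leadingCoeff_monomial]
  simpa only [degree_monomial_one] using toSyn_fermat_lt hq hmo hij

end Fermat

section polyRed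

variable {R : Type} [CommRing R] {q m : ℕ}

lemma polyRed_eq_sum_of_support_subset {f : MvPolynomial (Fin (m + 1)) R}
    {s : Finset (Fin (m + 1) →₀ ℕ)} (hs : f.support ⊆ s) :
    polyRed q f = ∑ μ ∈ s, monomial (projRed q μ) (coeff μ f) :=
  sum_subset hs fun μ _ hμ => by rw [notMem_support_iff.1 hμ, map_zero]

lemma polyRed_add (f g : MvPolynomial (Fin (m + 1)) R) :
    polyRed q (f + g) = polyRed q f + polyRed q g := by
  classical
  rw [polyRed_eq_sum_of_support_subset support_add,
    polyRed_eq_sum_of_support_subset (subset_union_left (s₂ := g.support)),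
    polyRed_eq_sum_of_support_subset (subset_union_right (s₁ := f.support)), ← sum_add_distrib]
  simp only [coeff_add, map_add]

lemma polyRed_sub (f g : MvPolynomial (Fin (m + 1)) R) :
    polyRed q (f - g) = polyRed q f - polyRed q g :=
  eq_sub_of_add_eq (by rw [← polyRed_add, sub_add_cancel])

lemma polyRed_monomial (ν : Fin (m + 1) →₀ ℕ) (c : R) :
    polyRed q (monomial ν c) = monomial (projRed q ν) c := by
  classical
  rw [polyRed_eq_sum_of_support_subset support_monomial_subset, sum_singleton, coeff_monomial,
    if_pos rfl]

lemma polyRed_monomial_mul_fermat (hq : 1 ≤ q) (i j : Fin (m + 1)) (ν : Fin (m + 1) →₀ ℕ)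
    (c : R) : polyRed q (monomial ν c * (X i ^ q * X j - X i * X j ^ q)) = 0 := by
  set μ := ν + single i 1 + single j 1
  have hi : i ∈ μ.support := by simp [μ]
  have hj : j ∈ μ.support := by simp [μ]
  have hℓ := μ.support.isGreatest_max' ⟨i, hi⟩
  have hsplit (t : Fin (m + 1)) : single t q = single t 1 + single t (q - 1) := by
    rw [← Finsupp.single_add, Nat.add_sub_of_le hq]
  have hlead : ν + (single i q + single j 1) = μ + single i (q - 1) := by
    simp only [μ, hsplit i]
    abel
  have htrail : ν + (single i 1 + single j q) = μ + single j (q - 1) := by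
    simp only [μ, hsplit j]
    abel
  rw [fermat_eq_monomial_sub, mul_sub, monomial_mul, monomial_mul, mul_one, polyRed_sub,
    polyRed_monomial, polyRed_monomial, hlead, htrail, projRed_add_single_sub_one hℓ hi,
    projRed_add_single_sub_one hℓ hj, sub_self]

lemma polyRed_eq_zero_of_mem_fermatIdeal (hq : 1 ≤ q) {f : MvPolynomial (Fin (m + 1)) R}
    (hf : f ∈ fermatIdeal q m R) : polyRed q f = 0 := by
  suffices h : ∀ p, polyRed q (p * f) = 0 by simpa using h 1
  refine Submodule.span_induction ?_ (fun p => by simp [polyRed]) ?_ ?_ hf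
  · rintro _ ⟨i, j, -, rfl⟩ p
    induction p using MvPolynomial.induction_on' with
    | monomial ν c => exact polyRed_monomial_mul_fermat hq i j ν c
    | add p p' hp hp' => rw [add_mul, polyRed_add, hp, hp', add_zero]
  · intro g g' _ _ hg hg' p
    rw [mul_add, polyRed_add, hg, hg', add_zero]
  · intro a g _ hg p
    rw [smul_eq_mul, ← mul_assoc]
    exact hg (p * a)

/-- No other monomial of `f` reduces onto the leading one, since reduction never increases a
monomial. -/
lemma coeff_degree_polyRed {mo : MonomialOrder (Fin (m + 1))}
    (hmo : Antitone fun i => mo.toSyn (single i 1)) {f : MvPolynomial (Fin (m + 1)) R}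
    (hfix : projRed q (mo.degree f) = mo.degree f) :
    coeff (mo.degree f) (polyRed q f) = coeff (mo.degree f) f := by
  classical
  rw [polyRed, coeff_sum]
  simp only [coeff_monomial]
  rw [sum_eq_single (mo.degree f)]
  · rw [if_pos hfix]
  · intro μ hμ hne
    rw [if_neg]
    intro h
    refine hne (mo.toSyn.injective (le_antisymm (mo.le_degree hμ) ?_))
    exact h ▸ toSyn_projRed_le hmo μ
  · intro h
    rw [notMem_support_iff.1 h, ite_self]

lemma exists_single_add_single_le_degree (hq : 1 ≤ q) {mo : MonomialOrder (Fin (m + 1))}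
    (hmo : Antitone fun i => mo.toSyn (single i 1)) {f : MvPolynomial (Fin (m + 1)) R}
    (hf : f ∈ fermatIdeal q m R) (hf0 : f ≠ 0) :
    ∃ i j, i < j ∧ single i q + single j 1 ≤ mo.degree f := by
  by_contra! hred
  have hcoeff := coeff_degree_polyRed hmo (projRed_eq_self hred)
  rw [polyRed_eq_zero_of_mem_fermatIdeal hq hf, coeff_zero, eq_comm,
    mo.coeff_degree_eq_zero_iff] at hcoeff
  exact hf0 hcoeff

end polyRed

theorem fermat_groebner_basis_general (q m : ℕ)
    (Fq : Type) [Field Fq] [Fintype Fq] (hq : Fintype.card Fq = q)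
    (k : Type) [Field k]
    (mo : MonomialOrder (Fin (m + 1)))
    (hvar : ∀ i j : Fin (m + 1), i < j →
      mo.toSyn (Finsupp.single j 1) < mo.toSyn (Finsupp.single i 1)) :
    (∀ f ∈ fermatIdeal q m k, f ≠ 0 →
      ∃ i j : Fin (m + 1), i < j ∧
        lmExp mo (X i ^ q * X j - X i * X j ^ q : MvPolynomial (Fin (m + 1)) k) ≤ lmExp mo f)
    ∧ (∀ i j : Fin (m + 1), i < j →
        MvPolynomial.coeff
          (lmExp mo (X i ^ q * X j - X i * X j ^ q : MvPolynomial (Fin (m + 1)) k))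
          (X i ^ q * X j - X i * X j ^ q : MvPolynomial (Fin (m + 1)) k) = 1 ∧
        ∀ r s : Fin (m + 1), r < s → (r, s) ≠ (i, j) →
          ∀ μ ∈ (X i ^ q * X j - X i * X j ^ q : MvPolynomial (Fin (m + 1)) k).support,
            ¬ lmExp mo (X r ^ q * X s - X r * X s ^ q : MvPolynomial (Fin (m + 1)) k) ≤ μ) := by
  have hq2 : 2 ≤ q := hq ▸ Fintype.one_lt_card
  have hmo : StrictAnti fun i => mo.toSyn (single i 1) := fun i j h => hvar i j h
  simp only [lmExp_eq_degree]
  refine ⟨fun f hf hf0 => ?_, fun i j hij => ⟨(monic_fermat hq2 hmo hij).coeff_degree, ?_⟩⟩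
  · obtain ⟨i, j, hij, hle⟩ := exists_single_add_single_le_degree (by omega) hmo.antitone hf hf0
    exact ⟨i, j, hij, by rwa [degree_fermat hq2 hmo hij]⟩
  · intro r s hrs hne μ hμ
    rw [degree_fermat hq2 hmo hrs]
    exact not_single_add_single_le_of_mem_support_fermat (by omega) hij hrs hne hμ

/-- The Fermat polynomials form a Gröbner basis (in fact a reduced Gröbner basis) of the
ideal they generate, with respect to any monomial order in which `x_0 ≻ x_1 ≻ ... ≻ x_m`:
the leading monomial of every nonzero member of the ideal is divisible by the leading
monomial of some Fermat polynomial, each Fermat polynomial has leading coefficient `1`, and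
no monomial of a Fermat polynomial is divisible by the leading monomial of another one. -/
theorem fermat_groebner_basis (q m : ℕ)
    (Fq : Type) [Field Fq] [Fintype Fq] (hq : Fintype.card Fq = q)
    (k : Type) [Field k] [Algebra Fq k] [Algebra.IsAlgebraic Fq k]
    (mo : MonomialOrder (Fin (m + 1)))
    (hvar : ∀ i j : Fin (m + 1), i < j →
      mo.toSyn (Finsupp.single j 1) < mo.toSyn (Finsupp.single i 1)) :
    (∀ f ∈ fermatIdeal q m k, f ≠ 0 →
      ∃ i j : Fin (m + 1), i < j ∧
        lmExp mo (X i ^ q * X j - X i * X j ^ q : MvPolynomial (Fin (m + 1)) k) ≤ lmExp mo f)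
    ∧ (∀ i j : Fin (m + 1), i < j →
        MvPolynomial.coeff
          (lmExp mo (X i ^ q * X j - X i * X j ^ q : MvPolynomial (Fin (m + 1)) k))
          (X i ^ q * X j - X i * X j ^ q : MvPolynomial (Fin (m + 1)) k) = 1 ∧
        ∀ r s : Fin (m + 1), r < s → (r, s) ≠ (i, j) →
          ∀ μ ∈ (X i ^ q * X j - X i * X j ^ q : MvPolynomial (Fin (m + 1)) k).support,
            ¬ lmExp mo (X r ^ q * X s - X r * X s ^ q : MvPolynomial (Fin (m + 1)) k) ≤ μ) :=
  fermat_groebner_basis_general q m Fq hq k mo hvar
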